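/- arXiv:2601.21445 — 10 statements merged into one kernel-verified Lean document; each statement's English description precedes it below -/
import Mathlib

section
/- Let X = {(a,b) ∈ ℕ⁺ × ℕ⁺ : a*b divides a² + b² + 1}. Then X equals the set of pairs (F(2n-1), F(2n+1)) for n ∈ ℤ, where F is the Fibonacci sequence extended to all integers. -/
/-!
The odd-indexed Fibonacci numbers `u n = F (2n - 1)` satisfy `u (n + 1) + u (n - 1) = 3 u n`
with `u 0 = u 1 = 1`, so the quantity `u n ^ 2 + u (n + 1) ^ 2 - 3 u n u (n + 1)` is constant,
equal to `-1`: consecutive terms solve `a² + b² + 1 = 3ab`. Conversely, write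
`a² + b² + 1 = kab`. If `a < b`, the other root `ka - b` of the quadratic in `b` is a positive
integer smaller than `b` (Vieta jumping), and similarly if `b < a`. The descent ends at `a = b`,
which forces `a = b = 1` and `k = 3`; retracing the jumps walks along the sequence `u`.
-/

section Recurrence

variable {R : Type*} [CommRing R] {u : ℤ → R} {k : R}

theorem sq_add_sq_sub_mul_eq_of_recurrence (hu : ∀ n, u (n + 1) + u (n - 1) = k * u n)
    (n : ℤ) :
    u n ^ 2 + u (n + 1) ^ 2 - k * u n * u (n + 1) = u 0 ^ 2 + u 1 ^ 2 - k * u 0 * u 1 := by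
  have hperiodic :
      Function.Periodic (fun n : ℤ => u n ^ 2 + u (n + 1) ^ 2 - k * u n * u (n + 1)) 1 := by
    intro n
    have hstep := hu (n + 1)
    rw [add_sub_cancel_right] at hstep
    linear_combination (u (n + 1 + 1) - u n) * hstep
  simpa using hperiodic.int_mul_eq n

theorem recurrence_one_sub (hu : ∀ n, u (n + 1) + u (n - 1) = k * u n) (n : ℤ) :
    u (1 - (n + 1)) + u (1 - (n - 1)) = k * u (1 - n) := by
  rw [← hu (1 - n), add_comm, show 1 - n + 1 = 1 - (n - 1) by ring,
    show 1 - n - 1 = 1 - (n + 1) by ring]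

end Recurrence

section OrderedRecurrence

variable {R : Type*} [CommRing R] [LinearOrder R] [IsStrictOrderedRing R] {u : ℤ → R} {k : R}

theorem pos_and_le_succ_of_recurrence (hk : 2 ≤ k) (hu : ∀ n, u (n + 1) + u (n - 1) = k * u n)
    (h0 : 0 < u 0) (h01 : u 0 ≤ u 1) {n : ℤ} (hn : 0 ≤ n) : 0 < u n ∧ u n ≤ u (n + 1) := by
  induction n, hn using Int.leInduction with
  | base => exact ⟨h0, h01⟩
  | succ n _ ih =>
    obtain ⟨hpos, hle⟩ := ih
    have hstep := hu (n + 1)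
    rw [add_sub_cancel_right] at hstep
    have hgrowth : 0 ≤ (k - 2) * u (n + 1) := mul_nonneg (by linarith) (by linarith)
    constructor <;> linarith

theorem pos_of_recurrence (hk : 2 ≤ k) (hu : ∀ n, u (n + 1) + u (n - 1) = k * u n)
    (h0 : 0 < u 0) (h01 : u 0 = u 1) (n : ℤ) : 0 < u n := by
  rcases le_or_gt 0 n with hn | hn
  · exact (pos_and_le_succ_of_recurrence hk hu h0 h01.le hn).1
  · simpa using (pos_and_le_succ_of_recurrence (u := fun m => u (1 - m)) hk
      (recurrence_one_sub hu) (by simpa [← h01] using h0) (by simp [h01])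
      (show 0 ≤ 1 - n by omega)).1

end OrderedRecurrence

theorem vieta_jump {a b k : ℤ} (ha : 0 < a) (hab : a < b) (h : a ^ 2 + b ^ 2 + 1 = k * a * b) :
    0 < k * a - b ∧ k * a - b < b ∧ (k * a - b) ^ 2 + a ^ 2 + 1 = k * (k * a - b) * a := by
  have hprod : b * (k * a - b) = a ^ 2 + 1 := by linear_combination -h
  refine ⟨pos_of_mul_pos_right (by rw [hprod]; positivity) (by omega), by nlinarith, by linear_combination h⟩

section ThreeRecurrence

variable {u : ℤ → ℤ} (hu : ∀ n, u (n + 1) + u (n - 1) = 3 * u n) (hu0 : u 0 = 1) (hu1 : u 1 = 1)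
include hu hu0 hu1

theorem eq_three_and_exists_of_sq_add_sq_add_one_eq_mul {a b k : ℤ} (ha : 0 < a) (hb : 0 < b)
    (h : a ^ 2 + b ^ 2 + 1 = k * a * b) : k = 3 ∧ ∃ n, u n = a ∧ u (n + 1) = b := by
  rcases lt_trichotomy a b with hab | rfl | hab
  · obtain ⟨hc, hcb, hc'⟩ := vieta_jump ha hab h
    obtain ⟨rfl, m, hm, hm1⟩ := eq_three_and_exists_of_sq_add_sq_add_one_eq_mul hc ha hc'
    have hstep := hu (m + 1)
    rw [add_sub_cancel_right, hm, hm1] at hstep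
    exact ⟨rfl, m + 1, hm1, by linarith⟩
  · have ha1 : a = 1 := Int.eq_one_of_mul_eq_one_right (b := k * a - 2 * a) ha.le
      (by linear_combination -h)
    subst ha1
    exact ⟨by linarith, 0, hu0, hu1⟩
  · obtain ⟨hc, hca, hc'⟩ := vieta_jump (k := k) hb hab (by linear_combination h)
    obtain ⟨rfl, m, hm, hm1⟩ :=
      eq_three_and_exists_of_sq_add_sq_add_one_eq_mul (k := k) hb hc
        (by linear_combination hc')
    have hstep := hu m
    rw [hm, hm1] at hstep
    exact ⟨rfl, m - 1, by linarith, by rwa [sub_add_cancel]⟩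
termination_by (a + b).toNat
decreasing_by all_goals omega

theorem setOf_mul_dvd_sq_add_sq_add_one_eq :
    {p : ℤ × ℤ | 0 < p.1 ∧ 0 < p.2 ∧ p.1 * p.2 ∣ p.1 ^ 2 + p.2 ^ 2 + 1}
      = {p : ℤ × ℤ | ∃ n : ℤ, p = (u n, u (n + 1))} := by
  ext ⟨a, b⟩
  simp only [Set.mem_ofPred_eq, Prod.mk.injEq]
  constructor
  · rintro ⟨ha, hb, k, hk⟩
    obtain ⟨-, n, rfl, rfl⟩ :=
      eq_three_and_exists_of_sq_add_sq_add_one_eq_mul hu hu0 hu1 (k := k) ha hb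
        (by rw [hk]; ring)
    exact ⟨n, rfl, rfl⟩
  · rintro ⟨n, rfl, rfl⟩
    have hpos := pos_of_recurrence (by norm_num) hu (by omega) (hu0.trans hu1.symm)
    have hconic := sq_add_sq_sub_mul_eq_of_recurrence hu n
    rw [hu0, hu1] at hconic
    exact ⟨hpos n, hpos (n + 1), 3, by linear_combination hconic⟩

end ThreeRecurrence

theorem fib_add_two_add_fib_sub_two {R : Type*} [CommRing R] {F : ℤ → R}
    (hrec : ∀ n : ℤ, F (n + 1) = F n + F (n - 1)) (m : ℤ) :
    F (m + 2) + F (m - 2) = 3 * F m := by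
  have h1 := hrec (m + 1)
  have h2 := hrec m
  have h3 := hrec (m - 1)
  rw [add_assoc, one_add_one_eq_two, add_sub_cancel_right] at h1
  rw [sub_sub, one_add_one_eq_two, sub_add_cancel] at h3
  linear_combination h1 + h2 - h3

/-- X = {(a,b) ∈ ℕ⁺ × ℕ⁺ : a*b ∣ a² + b² + 1} equals
{(F(2n-1), F(2n+1)) : n ∈ ℤ} for the Fibonacci sequence F extended to ℤ. -/
theorem markov_like_set_eq_fib
    (F : ℤ → ℤ) (hF0 : F 0 = 0) (hF1 : F 1 = 1)
    (hrec : ∀ n : ℤ, F (n + 1) = F n + F (n - 1)) :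
    {p : ℤ × ℤ | 0 < p.1 ∧ 0 < p.2 ∧ p.1 * p.2 ∣ p.1 ^ 2 + p.2 ^ 2 + 1}
      = {p : ℤ × ℤ | ∃ n : ℤ, p = (F (2 * n - 1), F (2 * n + 1))} := by
  have hodd : ∀ n : ℤ, F (2 * (n + 1) - 1) + F (2 * (n - 1) - 1) = 3 * F (2 * n - 1) := by
    intro n
    rw [show 2 * (n + 1) - 1 = 2 * n - 1 + 2 by ring, show 2 * (n - 1) - 1 = 2 * n - 1 - 2 by ring]
    exact fib_add_two_add_fib_sub_two hrec _
  have hF_neg_one : F (2 * 0 - 1) = 1 := by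
    have := hrec 0
    simp only [zero_add, zero_sub, hF0, hF1] at this
    simpa using this.symm
  rw [setOf_mul_dvd_sq_add_sq_add_one_eq (u := fun n => F (2 * n - 1)) hodd hF_neg_one
    (by simpa using hF1)]
  simp only [show ∀ n : ℤ, 2 * (n + 1) - 1 = 2 * n + 1 from fun n => by ring]
end

section
/- For all integers i, j, k: F(2(i+j+k)-1) = 3·F(2i-1)·F(2j-1)·F(2k-1) - F(2i-1)·F(2j-1)·F(2k+1) - F(2i-1)·F(2j+1)·F(2k-1) - F(2i+1)·F(2j-1)·F(2k-1) + F(2i+1)·F(2j+1)·F(2k+1). -/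
/-! Writing `fib (2x) = fib (2x + 1) - fib (2x - 1)`, the identity follows from three
applications of the addition formula `Int.fib_add`; a function satisfying the hypotheses
is `Int.fib`, since the two-sided recurrence determines it from its values at `0` and `1`. -/

namespace Int

theorem fib_add_one_eq_fib_add_fib_sub_one (n : ℤ) : fib (n + 1) = fib n + fib (n - 1) := by
  have h := fib_add_two (n - 1)
  rw [sub_add_cancel, show n - 1 + 2 = n + 1 by ring] at h
  rw [h, add_comm]

theorem eq_fib_of_recurrence {F : ℤ → ℤ} (h0 : F 0 = 0) (h1 : F 1 = 1)
    (hrec : ∀ n : ℤ, F (n + 1) = F n + F (n - 1)) : F = fib := by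
  suffices h : ∀ n : ℤ, F n = fib n ∧ F (n + 1) = fib (n + 1) from funext fun n ↦ (h n).1
  intro n
  induction n using Int.induction_on with
  | zero => simp [h0, h1]
  | succ n ih =>
    refine ⟨ih.2, ?_⟩
    rw [hrec, fib_add_one_eq_fib_add_fib_sub_one, add_sub_cancel_right, ih.1, ih.2]
  | pred n ih =>
    refine ⟨?_, by rw [sub_add_cancel, ih.1]⟩
    have hF := hrec (-n)
    have hfib := fib_add_one_eq_fib_add_fib_sub_one (-n)
    rw [ih.1, ih.2] at hF
    linarith

theorem fib_two_mul_add_add_sub_one (i j k : ℤ) :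
    fib (2 * (i + j + k) - 1) =
      3 * fib (2 * i - 1) * fib (2 * j - 1) * fib (2 * k - 1)
      - fib (2 * i - 1) * fib (2 * j - 1) * fib (2 * k + 1)
      - fib (2 * i - 1) * fib (2 * j + 1) * fib (2 * k - 1)
      - fib (2 * i + 1) * fib (2 * j - 1) * fib (2 * k - 1)
      + fib (2 * i + 1) * fib (2 * j + 1) * fib (2 * k + 1) := by
  have even_eq (x : ℤ) : fib (2 * x) = fib (2 * x + 1) - fib (2 * x - 1) := by
    rw [fib_add_one_eq_fib_add_fib_sub_one]; ring
  have hijk := fib_add (2 * i) (2 * j + 2 * k - 1)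
  have hjk_odd := fib_add (2 * j) (2 * k - 1)
  have hjk_even := fib_add (2 * j) (2 * k)
  rw [show 2 * i + (2 * j + 2 * k - 1) = 2 * (i + j + k) - 1 by ring,
    sub_add_cancel, show 2 * j + 2 * k - 1 = 2 * j + (2 * k - 1) by ring, hjk_odd,
    sub_add_cancel, hjk_even] at hijk
  rw [hijk, even_eq i, even_eq j, even_eq k]
  ring

end Int

/-- Fibonacci identity for F(2(i+j+k)-1). -/
theorem fib_triple_identity
    (F : ℤ → ℤ) (hF0 : F 0 = 0) (hF1 : F 1 = 1)
    (hrec : ∀ n : ℤ, F (n + 1) = F n + F (n - 1)) :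
    ∀ i j k : ℤ,
      F (2 * (i + j + k) - 1) =
        3 * F (2 * i - 1) * F (2 * j - 1) * F (2 * k - 1)
        - F (2 * i - 1) * F (2 * j - 1) * F (2 * k + 1)
        - F (2 * i - 1) * F (2 * j + 1) * F (2 * k - 1)
        - F (2 * i + 1) * F (2 * j - 1) * F (2 * k - 1)
        + F (2 * i + 1) * F (2 * j + 1) * F (2 * k + 1) := by
  obtain rfl := Int.eq_fib_of_recurrence hF0 hF1 hrec
  exact Int.fib_two_mul_add_add_sub_one
end

section
/- Let A be a 3-by-3 integer matrix with entries (a,b,c; d,e,f; g,h,i) such that det A = 0 and the four 2-by-2 minors ae-bd, bf-ce, dh-eg, ei-fh are all equal to a nonzero integer N. Then N·(d + f) = (a*f - c*d)·e, and moreover a*f - c*d = d*i - f*g. -/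
/-! Put `X = (a * f - c * d) - (d * i - f * g)`. The four minors being equal gives `e * X = 0`,
and together with the cofactor expansion of `det A = 0` also `b * X = 0`; hence
`N * X = (a * e - b * d) * X = a * (e * X) - d * (b * X) = 0`, and `N ≠ 0` forces `X = 0`. -/

theorem mul_cross_minor_eq_of_det_eq_zero {R : Type*} [CommRing R] {a b c d e f g h i N : R}
    (hdet : a * (e * i - f * h) - b * (d * i - f * g) + c * (d * h - e * g) = 0)
    (h1 : a * e - b * d = N) (h2 : b * f - c * e = N)
    (h3 : d * h - e * g = N) (h4 : e * i - f * h = N) :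
    N * (a * f - c * d) = N * (d * i - f * g) := by
  set X := a * f - c * d - (d * i - f * g)
  have he : e * X = 0 := by linear_combination f * h1 + d * h2 - d * h4 - f * h3
  have hb : b * X = 0 := by linear_combination a * h2 + c * h1 + hdet - a * h4 - c * h3
  linear_combination a * he - d * hb - X * h1

/-- 3×3 matrix with det 0 and the four indicated 2×2 minors equal to N ≠ 0. -/
theorem tame_three_by_three (a b c d e f g h i N : ℤ) (hN : N ≠ 0)
    (hdet : a * (e * i - f * h) - b * (d * i - f * g) + c * (d * h - e * g) = 0)
    (h1 : a * e - b * d = N) (h2 : b * f - c * e = N)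
    (h3 : d * h - e * g = N) (h4 : e * i - f * h = N) :
    N * (d + f) = (a * f - c * d) * e ∧ a * f - c * d = d * i - f * g :=
  ⟨by linear_combination (-f) * h1 - d * h2,
    mul_left_cancel₀ hN (mul_cross_minor_eq_of_det_eq_zero hdet h1 h2 h3 h4)⟩
end

section
/- Define the Cayley hyperdeterminant of a 2×2×2 integer array M with entries m_{ijk} (i,j,k ∈ {0,1}) by Det M = ((m₀₀₀m₁₁₁ - m₀₁₁m₁₀₀) + (m₀₀₁m₁₁₀ - m₀₁₀m₁₀₁))² - 4(m₀₀₀m₁₁₀ - m₀₁₀m₁₀₀)(m₀₀₁m₁₁₁ - m₀₁₁m₁₀₁). If M' is obtained from M by acting with a triple of 2×2 integer matrices (A,B,C) via m'_{ijk} = Σ_{p,q,r} A_{ip}B_{jq}C_{kr}m_{pqr}, then Det M' = (det A · det B · det C)² · Det M. -/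
/-!
The action of `(A, B, C)` is the composite of three actions, `A` on the first index, `B` on the
second and `C` on the third. Under each of them `hyperDet`, a quartic form invariant under
`SL₂` in every index, is multiplied by the square of the determinant of the acting matrix;
for a single matrix this is a polynomial identity in twelve variables.
-/

/-- Cayley hyperdeterminant of a 2×2×2 integer array. -/
def hyperDet (M : Fin 2 → Fin 2 → Fin 2 → ℤ) : ℤ :=
  ((M 0 0 0 * M 1 1 1 - M 0 1 1 * M 1 0 0)
      + (M 0 0 1 * M 1 1 0 - M 0 1 0 * M 1 0 1)) ^ 2
    - 4 * (M 0 0 0 * M 1 1 0 - M 0 1 0 * M 1 0 0)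
        * (M 0 0 1 * M 1 1 1 - M 0 1 1 * M 1 0 1)

section SlotActions

variable {R : Type*} [CommSemiring R] {m : Type*} [Fintype m]

def actFirst (A : Matrix m m R) (M : m → m → m → R) : m → m → m → R :=
  fun i j k => ∑ p, A i p * M p j k

def actSecond (B : Matrix m m R) (M : m → m → m → R) : m → m → m → R :=
  fun i j k => ∑ q, B j q * M i q k

def actThird (C : Matrix m m R) (M : m → m → m → R) : m → m → m → R :=
  fun i j k => ∑ r, C k r * M i j r

theorem actFirst_actSecond_actThird (A B C : Matrix m m R) (M : m → m → m → R) (i j k : m) :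
    actFirst A (actSecond B (actThird C M)) i j k
      = ∑ p, ∑ q, ∑ r, A i p * B j q * C k r * M p q r := by
  simp only [actFirst, actSecond, actThird, Finset.mul_sum, mul_assoc]

end SlotActions

theorem hyperDet_actFirst (A : Matrix (Fin 2) (Fin 2) ℤ) (M : Fin 2 → Fin 2 → Fin 2 → ℤ) :
    hyperDet (actFirst A M) = A.det ^ 2 * hyperDet M := by
  simp only [hyperDet, actFirst, Fin.sum_univ_two, Matrix.det_fin_two]
  ring

theorem hyperDet_actSecond (B : Matrix (Fin 2) (Fin 2) ℤ) (M : Fin 2 → Fin 2 → Fin 2 → ℤ) :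
    hyperDet (actSecond B M) = B.det ^ 2 * hyperDet M := by
  simp only [hyperDet, actSecond, Fin.sum_univ_two, Matrix.det_fin_two]
  ring

theorem hyperDet_actThird (C : Matrix (Fin 2) (Fin 2) ℤ) (M : Fin 2 → Fin 2 → Fin 2 → ℤ) :
    hyperDet (actThird C M) = C.det ^ 2 * hyperDet M := by
  simp only [hyperDet, actThird, Fin.sum_univ_two, Matrix.det_fin_two]
  ring

/-- the hyperdeterminant transforms by (det A · det B · det C)² under
the action of a triple of 2×2 integer matrices. -/
theorem hyperDet_action (M M' : Fin 2 → Fin 2 → Fin 2 → ℤ)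
    (A B C : Matrix (Fin 2) (Fin 2) ℤ)
    (hM' : ∀ i j k, M' i j k = ∑ p, ∑ q, ∑ r, A i p * B j q * C k r * M p q r) :
    hyperDet M' = (A.det * B.det * C.det) ^ 2 * hyperDet M := by
  have hM'_eq : M' = actFirst A (actSecond B (actThird C M)) := by
    ext i j k
    rw [hM', actFirst_actSecond_actThird]
  rw [hM'_eq, hyperDet_actFirst, hyperDet_actSecond, hyperDet_actThird]
  ring
end

section
/- Let A, B, C ∈ SL₂(ℤ) and suppose the triple (A,B,C) fixes the 2×2×2 array I (with I₀₀₀ = I₁₁₁ = 1 and all other entries 0) under the action m'_{ijk} = Σ A_{ip}B_{jq}C_{kr} I_{pqr}. Then (A,B,C) is one of (I₂,I₂,I₂), (I₂,-I₂,-I₂), (-I₂,I₂,-I₂), (-I₂,-I₂,I₂), where I₂ is the 2×2 identity matrix. -/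
def cubeI : Fin 2 → Fin 2 → Fin 2 → ℤ :=
  fun i j k => if i = j ∧ j = k then 1 else 0

/-!
Expanding `cubeI`, the action sends `I` to `Σ_r C_{kr} A_{ir} B_{jr}`. The entries with `i = j`
say `C (A ⊙ B)ᵀ = 1`; since `C` is invertible, those with `i ≠ j` say `A_{ir} B_{jr} = 0`.
Under this orthogonality `det (A ⊙ B) + det A det B = 2 A₀₀ A₁₁ B₀₀ B₁₁`, so when all
determinants are `1` the diagonal entries of `A` and `B` are units. Orthogonality then kills the
off-diagonal entries, so `A, B = ±1`, and `C = ((A ⊙ B)ᵀ)⁻¹ = A B`.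
-/

open Matrix

namespace Matrix

variable {n R : Type*} [Fintype n] [CommRing R]

theorem isDiag_and_isDiag_of_mul_eq_zero {A B : Matrix n n R}
    (horth : ∀ i j r, i ≠ j → A i r * B j r = 0) (hunit : IsUnit (∏ i, A i i * B i i)) :
    A.IsDiag ∧ B.IsDiag := by
  have hdiag i : IsUnit (A i i) ∧ IsUnit (B i i) :=
    IsUnit.mul_iff.mp (IsUnit.prod_univ_iff.mp hunit i)
  exact ⟨fun i j hij => (hdiag j).2.mul_left_eq_zero.mp (horth i j j hij),
    fun i j hij => (hdiag j).1.mul_right_eq_zero.mp (horth j i j hij.symm)⟩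

theorem det_hadamard_add_det_mul_det {A B : Matrix (Fin 2) (Fin 2) R}
    (horth : ∀ i j r, i ≠ j → A i r * B j r = 0) :
    (A ⊙ B).det + A.det * B.det = 2 * ∏ i, A i i * B i i := by
  simp only [det_fin_two, hadamard_apply, Fin.prod_univ_two]
  linear_combination (-(A 1 1 * B 0 1)) * horth 0 1 0 (by decide)
    - (A 0 1 * B 1 1) * horth 1 0 0 (by decide)

theorem IsDiag.hadamard_eq_mul [DecidableEq n] {A B : Matrix n n R} (hA : A.IsDiag)
    (hB : B.IsDiag) : A ⊙ B = A * B := by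
  rw [← hA.diagonal_diag, ← hB.diagonal_diag, diagonal_hadamard_diagonal, diagonal_mul_diagonal]
  rfl

theorem IsDiag.eq_one_or_eq_neg_one_of_det_eq_one {A : Matrix (Fin 2) (Fin 2) ℤ}
    (hA : A.IsDiag) (hdet : A.det = 1) : A = 1 ∨ A = -1 := by
  rw [det_fin_two, hA (i := 0) (j := 1) (by decide), zero_mul, sub_zero] at hdet
  rw [← hA.diagonal_diag]
  rcases Int.mul_eq_one_iff_eq_one_or_neg_one.mp hdet with ⟨h0, h1⟩ | ⟨h0, h1⟩
  · left; ext i j; fin_cases i <;> fin_cases j <;> simp [h0, h1]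
  · right; ext i j; fin_cases i <;> fin_cases j <;> simp [h0, h1]

end Matrix

theorem sum_mul_cubeI (A B C : Matrix (Fin 2) (Fin 2) ℤ) (i j k : Fin 2) :
    ∑ p, ∑ q, ∑ r, A i p * B j q * C k r * cubeI p q r = ∑ r, C k r * (A i r * B j r) := by
  simp [cubeI, Fin.sum_univ_two, mul_comm, mul_left_comm]

section cubeI

variable {A B C : Matrix (Fin 2) (Fin 2) ℤ}

theorem mul_hadamard_transpose_eq_one_of_fixes_cubeI
    (hfix : ∀ i j k, ∑ r, C k r * (A i r * B j r) = cubeI i j k) : C * (A ⊙ B)ᵀ = 1 := by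
  ext k i
  have := hfix i i k
  simp only [cubeI, true_and] at this
  simpa [mul_apply, one_apply, eq_comm] using this

theorem mul_eq_zero_of_fixes_cubeI (hC : C.det ≠ 0)
    (hfix : ∀ i j k, ∑ r, C k r * (A i r * B j r) = cubeI i j k) :
    ∀ i j r, i ≠ j → A i r * B j r = 0 := by
  intro i j r hij
  have hker : C *ᵥ (fun r => A i r * B j r) = 0 := by
    ext k
    simp [mulVec, dotProduct, hfix, cubeI, hij]
  exact congrFun (eq_zero_of_mulVec_eq_zero hC hker) r

end cubeI

/-- the stabilizer of I in SL₂(ℤ)³ is the Klein four-group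
{(I,I,I),(I,-I,-I),(-I,I,-I),(-I,-I,I)}. -/
theorem stabilizer_cubeI (A B C : Matrix (Fin 2) (Fin 2) ℤ)
    (hA : A.det = 1) (hB : B.det = 1) (hC : C.det = 1)
    (hfix : ∀ i j k, (∑ p, ∑ q, ∑ r, A i p * B j q * C k r * cubeI p q r)
        = cubeI i j k) :
    (A = 1 ∧ B = 1 ∧ C = 1) ∨ (A = 1 ∧ B = -1 ∧ C = -1) ∨
    (A = -1 ∧ B = 1 ∧ C = -1) ∨ (A = -1 ∧ B = -1 ∧ C = 1) := by
  simp only [sum_mul_cubeI] at hfix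
  have hinv := mul_hadamard_transpose_eq_one_of_fixes_cubeI hfix
  have horth := mul_eq_zero_of_fixes_cubeI (hC ▸ one_ne_zero) hfix
  have hdet : (A ⊙ B).det = 1 := by simpa [hC] using congrArg det hinv
  have hdiag : ∏ i, A i i * B i i = 1 := by
    have := det_hadamard_add_det_mul_det horth
    rw [hdet, hA, hB] at this
    linarith
  obtain ⟨hAd, hBd⟩ := isDiag_and_isDiag_of_mul_eq_zero horth (hdiag ▸ isUnit_one)
  rw [hAd.hadamard_eq_mul hBd] at hinv
  rcases hAd.eq_one_or_eq_neg_one_of_det_eq_one hA with rfl | rfl <;>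
    rcases hBd.eq_one_or_eq_neg_one_of_det_eq_one hB with rfl | rfl <;>
    simp_all [neg_eq_iff_eq_neg]
end

section
/- For every integer n, the 2×2×2 array A_n with entries a₀₀₀ = F(2n-3), a₀₀₁ = a₀₁₀ = a₁₀₀ = F(2n-1), a₀₁₁ = a₁₀₁ = a₁₁₀ = F(2n+1), a₁₁₁ = F(2n+3) has all six 2×2 cross sections of determinant 1, and its Cayley hyperdeterminant equals 5. -/
open Function

section SymmetricCube

variable (A : Fin 2 → Fin 2 → Fin 2 → ℤ) (a b c d : ℤ)
  (h000 : A 0 0 0 = a) (h001 : A 0 0 1 = b) (h010 : A 0 1 0 = b) (h100 : A 1 0 0 = b)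
  (h011 : A 0 1 1 = c) (h101 : A 1 0 1 = c) (h110 : A 1 1 0 = c) (h111 : A 1 1 1 = d)
include h000 h001 h010 h100 h011 h101 h110 h111

theorem crossSections_of_symmetric (hac : a * c - b ^ 2 = 1) (hbd : b * d - c ^ 2 = 1) :
    (∀ i, A i 0 0 * A i 1 1 - A i 0 1 * A i 1 0 = 1) ∧
    (∀ j, A 0 j 0 * A 1 j 1 - A 0 j 1 * A 1 j 0 = 1) ∧
    (∀ k, A 0 0 k * A 1 1 k - A 0 1 k * A 1 0 k = 1) := by
  simp only [Fin.forall_fin_two, h000, h001, h010, h100, h011, h101, h110, h111]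
  rw [sq] at hac hbd
  exact ⟨⟨hac, hbd⟩, ⟨hac, hbd⟩, ⟨hac, hbd⟩⟩

theorem hyperDet_of_symmetric :
    hyperDet A = (a * d - b * c) ^ 2 - 4 * (a * c - b ^ 2) * (b * d - c ^ 2) := by
  simp only [hyperDet, h000, h001, h010, h100, h011, h101, h110, h111]
  ring

end SymmetricCube

section FibonacciLike

variable (F : ℤ → ℤ) (hrec : ∀ n : ℤ, F (n + 1) = F n + F (n - 1))

def cassiniForm (m : ℤ) : ℤ := F m ^ 2 + F m * F (m + 1) - F (m + 1) ^ 2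

include hrec

theorem add_two_of_rec (m : ℤ) : F (m + 2) = F (m + 1) + F m := by
  simpa [add_assoc] using hrec (m + 1)

theorem cassiniForm_antiperiodic : Antiperiodic (cassiniForm F) 1 := by
  intro m
  simp only [cassiniForm, add_assoc, one_add_one_eq_two, add_two_of_rec F hrec m]
  ring

theorem sub_two_of_rec (m : ℤ) : F (m - 2) = 2 * F m - F (m + 1) := by
  have h₁ := hrec m
  have h₂ := hrec (m - 1)
  rw [sub_add_cancel, sub_sub, one_add_one_eq_two] at h₂
  linarith

theorem add_four_of_rec (m : ℤ) : F (m + 4) = 2 * F m + 3 * F (m + 1) := by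
  have h₃ := add_two_of_rec F hrec (m + 1)
  have h₄ := add_two_of_rec F hrec (m + 2)
  rw [show m + 1 + 2 = m + 3 by ring, show m + 1 + 1 = m + 2 by ring] at h₃
  rw [show m + 2 + 2 = m + 4 by ring, show m + 2 + 1 = m + 3 by ring] at h₄
  rw [h₄, h₃, add_two_of_rec F hrec m]
  ring

theorem mul_sub_sq_eq_cassiniForm (m : ℤ) :
    F (m - 2) * F (m + 2) - F m ^ 2 = cassiniForm F m := by
  rw [cassiniForm, sub_two_of_rec F hrec, add_two_of_rec F hrec]
  ring

theorem mul_sub_mul_eq_three_mul_cassiniForm (m : ℤ) :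
    F (m - 2) * F (m + 4) - F m * F (m + 2) = 3 * cassiniForm F m := by
  rw [cassiniForm, sub_two_of_rec F hrec, add_four_of_rec F hrec, add_two_of_rec F hrec]
  ring

theorem cassiniForm_of_odd (hF0 : F 0 = 0) (hF1 : F 1 = 1) {m : ℤ} (hm : Odd m) :
    cassiniForm F m = 1 := by
  obtain ⟨k, rfl⟩ := hm
  have hanti := cassiniForm_antiperiodic F hrec
  have hperiod : cassiniForm F (k * (2 * 1)) = cassiniForm F 0 :=
    hanti.periodic_two_mul.int_mul_eq k
  rw [hanti, show 2 * k = k * (2 * 1) by ring, hperiod]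
  simp [cassiniForm, hF0, hF1]

end FibonacciLike

/-- the Fibonacci cube A_n has all six cross sections of
determinant 1 and hyperdeterminant 5. -/
theorem fib_cube_cross_sections
    (F : ℤ → ℤ) (hF0 : F 0 = 0) (hF1 : F 1 = 1)
    (hrec : ∀ n : ℤ, F (n + 1) = F n + F (n - 1)) :
    ∀ n : ℤ, ∀ A : Fin 2 → Fin 2 → Fin 2 → ℤ,
      A 0 0 0 = F (2 * n - 3) →
      A 0 0 1 = F (2 * n - 1) → A 0 1 0 = F (2 * n - 1) → A 1 0 0 = F (2 * n - 1) →
      A 0 1 1 = F (2 * n + 1) → A 1 0 1 = F (2 * n + 1) → A 1 1 0 = F (2 * n + 1) →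
      A 1 1 1 = F (2 * n + 3) →
      ((∀ i, A i 0 0 * A i 1 1 - A i 0 1 * A i 1 0 = 1) ∧
       (∀ j, A 0 j 0 * A 1 j 1 - A 0 j 1 * A 1 j 0 = 1) ∧
       (∀ k, A 0 0 k * A 1 1 k - A 0 1 k * A 1 0 k = 1) ∧
       hyperDet A = 5) := by
  intro n A h000 h001 h010 h100 h011 h101 h110 h111
  set m := 2 * n - 1
  have hodd : Odd m := ⟨n - 1, by ring⟩
  rw [show 2 * n - 3 = m - 2 by ring] at h000
  rw [show 2 * n + 1 = m + 2 by ring] at h011 h101 h110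
  rw [show 2 * n + 3 = m + 4 by ring] at h111
  have hq : cassiniForm F m = 1 := cassiniForm_of_odd F hrec hF0 hF1 hodd
  have hq₂ : cassiniForm F (m + 2) = 1 :=
    cassiniForm_of_odd F hrec hF0 hF1 (hodd.add_even even_two)
  have hac : F (m - 2) * F (m + 2) - F m ^ 2 = 1 := by
    rw [mul_sub_sq_eq_cassiniForm F hrec, hq]
  have hbd : F m * F (m + 4) - F (m + 2) ^ 2 = 1 := by
    simpa [add_assoc, hq₂] using mul_sub_sq_eq_cassiniForm F hrec (m + 2)
  have had : F (m - 2) * F (m + 4) - F m * F (m + 2) = 3 := by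
    rw [mul_sub_mul_eq_three_mul_cassiniForm F hrec, hq, mul_one]
  obtain ⟨hi, hj, hk⟩ :=
    crossSections_of_symmetric A _ _ _ _ h000 h001 h010 h100 h011 h101 h110 h111 hac hbd
  refine ⟨hi, hj, hk, ?_⟩
  rw [hyperDet_of_symmetric A _ _ _ _ h000 h001 h010 h100 h011 h101 h110 h111, had, hac, hbd]
  norm_num
end

section
/- Let α, β, γ, δ be negative integers with δ² + 4αβγ = 1. Define g_α = gcd(α, (1-δ)/2), h_α = -gcd(α, (1+δ)/2), and similarly g_β, h_β, g_γ, h_γ. Then g_α·h_α = α, g_β·h_β = β, g_γ·h_γ = γ, g_α·g_β·g_γ = (1-δ)/2, and h_α·h_β·h_γ = (1+δ)/2. -/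
/-!
With `m = (1 - δ) / 2` and `n = (1 + δ) / 2` we have `m + n = 1` and `m * n = α * β * γ`, so `m`
and `n` are coprime and each of `α, β, γ` divides `m * n`; hence `gcd x m * gcd x n = |x|`.
The products `P = ∏ gcd x m` and `Q = ∏ gcd x n` then satisfy `P * Q = |m * n|` with `P` coprime
to `n` and `Q` coprime to `m`, which forces `P = |m|` and `Q = |n|`. Finally `δ < 0` gives
`m > 0 ≥ n`, which fixes the signs.
-/

open Finset

theorem Nat.prod_gcd_eq_of_prod_eq_mul {ι : Type*} {s : Finset ι} {f : ι → ℕ} {m n : ℕ}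
    (hmn : m.Coprime n) (hprod : ∏ i ∈ s, f i = m * n) : ∏ i ∈ s, (f i).gcd m = m := by
  set P := ∏ i ∈ s, (f i).gcd m
  set Q := ∏ i ∈ s, (f i).gcd n
  have hPQ : P * Q = m * n := by
    rw [← prod_mul_distrib, ← hprod]
    refine prod_congr rfl fun i hi => ?_
    exact (gcd_mul_gcd_eq_iff_dvd_mul_of_coprime hmn).mpr (hprod ▸ dvd_prod_of_mem f hi)
  have hPn : P.Coprime n := Coprime.prod_left fun i _ => hmn.coprime_dvd_left (gcd_dvd_right _ _)
  have hQm : Q.Coprime m :=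
    Coprime.prod_left fun i _ => hmn.symm.coprime_dvd_left (gcd_dvd_right _ _)
  have hPm : P ∣ m := hPn.dvd_of_dvd_mul_right (hPQ ▸ dvd_mul_right P Q)
  calc P = P.gcd m := (gcd_eq_left hPm).symm
    _ = (P * Q).gcd m := (hQm.gcd_mul_right_cancel P).symm
    _ = m := by rw [hPQ, gcd_mul_right_left]

theorem Int.prod_gcd_eq_abs_of_prod_eq_mul {ι : Type*} {s : Finset ι} {f : ι → ℤ} {m n : ℤ}
    (hmn : IsCoprime m n) (hprod : ∏ i ∈ s, f i = m * n) :
    ∏ i ∈ s, ((f i).gcd m : ℤ) = |m| := by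
  have hprod' : ∏ i ∈ s, (f i).natAbs = m.natAbs * n.natAbs := by
    rw [← natAbs_mul, ← hprod]
    exact (map_prod natAbsHom f s).symm
  rw [← natCast_natAbs, ← Nat.prod_gcd_eq_of_prod_eq_mul (isCoprime_iff_gcd_eq_one.mp hmn) hprod']
  push_cast
  rfl

theorem Int.gcd_mul_gcd_eq_abs_of_dvd_mul {x m n : ℤ} (hmn : IsCoprime m n) (hx : x ∣ m * n) :
    (x.gcd m : ℤ) * x.gcd n = |x| := by
  have hx' : x.natAbs ∣ m.natAbs * n.natAbs := by
    rw [← natAbs_mul]; exact natAbs_dvd_natAbs.mpr hx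
  rw [← natCast_natAbs,
    ← (Nat.gcd_mul_gcd_eq_iff_dvd_mul_of_coprime (isCoprime_iff_gcd_eq_one.mp hmn)).mpr hx']
  rfl

/-- gcd decomposition for negative α, β, γ, δ with δ² + 4αβγ = 1. -/
theorem gcd_decomposition (α β γ δ : ℤ)
    (hα : α < 0) (hβ : β < 0) (hγ : γ < 0) (hδ : δ < 0)
    (h : δ ^ 2 + 4 * α * β * γ = 1) :
    (Int.gcd α ((1 - δ) / 2) : ℤ) * (-(Int.gcd α ((1 + δ) / 2) : ℤ)) = α ∧
    (Int.gcd β ((1 - δ) / 2) : ℤ) * (-(Int.gcd β ((1 + δ) / 2) : ℤ)) = β ∧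
    (Int.gcd γ ((1 - δ) / 2) : ℤ) * (-(Int.gcd γ ((1 + δ) / 2) : ℤ)) = γ ∧
    (Int.gcd α ((1 - δ) / 2) : ℤ) * (Int.gcd β ((1 - δ) / 2) : ℤ)
        * (Int.gcd γ ((1 - δ) / 2) : ℤ) = (1 - δ) / 2 ∧
    (-(Int.gcd α ((1 + δ) / 2) : ℤ)) * (-(Int.gcd β ((1 + δ) / 2) : ℤ))
        * (-(Int.gcd γ ((1 + δ) / 2) : ℤ)) = (1 + δ) / 2 := by
  obtain ⟨k, hk⟩ : Odd δ :=
    (Int.odd_pow.mp ⟨-2 * α * β * γ, by linear_combination h⟩).resolve_right two_ne_zero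
  set m := (1 - δ) / 2
  set n := (1 + δ) / 2
  have hm : 2 * m = 1 - δ := by omega
  have hn : 2 * n = 1 + δ := by omega
  have hcop : IsCoprime m n := ⟨1, 1, by omega⟩
  have hmn : α * β * γ = m * n :=
    mul_left_cancel₀ four_ne_zero (by linear_combination h - 2 * n * hm - (1 - δ) * hn)
  have hnm : α * β * γ = n * m := hmn.trans (mul_comm m n)
  have hsplit {x : ℤ} (hx : x < 0) (hdvd : x ∣ α * β * γ) :
      (x.gcd m : ℤ) * -(x.gcd n : ℤ) = x := by
    rw [mul_neg, Int.gcd_mul_gcd_eq_abs_of_dvd_mul hcop (hmn ▸ hdvd), abs_of_neg hx, neg_neg]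
  have hprod_m := Int.prod_gcd_eq_abs_of_prod_eq_mul (s := univ) (f := ![α, β, γ]) hcop
    (by simpa [Fin.prod_univ_three] using hmn)
  have hprod_n := Int.prod_gcd_eq_abs_of_prod_eq_mul (s := univ) (f := ![α, β, γ]) hcop.symm
    (by simpa [Fin.prod_univ_three] using hnm)
  simp only [Fin.prod_univ_three, Matrix.cons_val] at hprod_m hprod_n
  refine ⟨hsplit hα ⟨β * γ, by ring⟩, hsplit hβ ⟨α * γ, by ring⟩, hsplit hγ ⟨α * β, by ring⟩, ?_, ?_⟩
  · rw [hprod_m, abs_of_nonneg (by omega)]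
  · linear_combination -hprod_n - abs_of_nonpos (show n ≤ 0 by omega)
end

section
/- Let (a_i, b_i) for i ranging over three consecutive integers i-1, i, i+1 be vertices of a path in the Farey graph 𝓕_R, meaning a_{i-1}·b_i - b_{i-1}·a_i = R and a_i·b_{i+1} - b_i·a_{i+1} = R, where R is a nonzero integer. Let λ = (a_{i-1}·b_{i+1} - b_{i-1}·a_{i+1})/R. Then a_{i-1} + a_{i+1} = λ·a_i and b_{i-1} + b_{i+1} = λ·b_i. -/
/-! For vectors `u, v, w` in a plane, `[v w] u - [u w] v + [u v] w = 0`, where `[x y]` is the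
2×2 determinant. On a Farey path `[u v] = [v w] = R`, so `R (u + w) = [u w] v`. -/

theorem det_mul_add_det_mul_eq_det_mul {A : Type*} [CommRing A] (a₀ b₀ a₁ b₁ a₂ b₂ : A) :
    (a₁ * b₂ - b₁ * a₂) * a₀ + (a₀ * b₁ - b₀ * a₁) * a₂ = (a₀ * b₂ - b₀ * a₂) * a₁ ∧
    (a₁ * b₂ - b₁ * a₂) * b₀ + (a₀ * b₁ - b₀ * a₁) * b₂ = (a₀ * b₂ - b₀ * a₂) * b₁ := by
  constructor <;> ring

theorem add_eq_div_mul_of_det_eq {K : Type*} [Field K] {R a₀ b₀ a₁ b₁ a₂ b₂ : K} (hR : R ≠ 0)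
    (h1 : a₀ * b₁ - b₀ * a₁ = R) (h2 : a₁ * b₂ - b₁ * a₂ = R) :
    a₀ + a₂ = (a₀ * b₂ - b₀ * a₂) / R * a₁ ∧ b₀ + b₂ = (a₀ * b₂ - b₀ * a₂) / R * b₁ := by
  obtain ⟨ha, hb⟩ := det_mul_add_det_mul_eq_det_mul a₀ b₀ a₁ b₁ a₂ b₂
  rw [h1, h2, ← mul_add] at ha hb
  constructor
  · rw [div_mul_eq_mul_div, eq_div_iff hR, mul_comm]
    exact ha
  · rw [div_mul_eq_mul_div, eq_div_iff hR, mul_comm]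
    exact hb

/-- three consecutive vertices of a path in 𝓕_R satisfy the
linear recurrence with coefficient λ = (a₋b₊ - b₋a₊)/R. -/
theorem farey_path_recurrence (R : ℤ) (hR : R ≠ 0)
    (a₀ b₀ a₁ b₁ a₂ b₂ : ℤ)
    (h1 : a₀ * b₁ - b₀ * a₁ = R) (h2 : a₁ * b₂ - b₁ * a₂ = R) :
    ((a₀ + a₂ : ℤ) : ℚ) = ((a₀ * b₂ - b₀ * a₂ : ℤ) : ℚ) / (R : ℚ) * (a₁ : ℚ) ∧
    ((b₀ + b₂ : ℤ) : ℚ) = ((a₀ * b₂ - b₀ * a₂ : ℤ) : ℚ) / (R : ℚ) * (b₁ : ℚ) := by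
  push_cast
  exact add_eq_div_mul_of_det_eq (by exact_mod_cast hR) (by exact_mod_cast h1)
    (by exact_mod_cast h2)
end

section
/- Let N be a nonzero integer, and suppose (a_i/b_i)_{i} and (c_j/d_j)_{j} are sequences of integer pairs indexed by intervals of ℤ, such that a_{i-1}b_i - b_{i-1}a_i = R for all consecutive i and c_{j-1}d_j - d_{j-1}c_j = S for all consecutive j, where R, S are positive integers. Let K, L be nonzero integers with K > 0 and N = K²LRS, and define m_{ij} = K(a_i·d_j - L·b_i·c_j). Then every 2×2 subblock of (m_{ij}) (i.e., m_{i,j}·m_{i+1,j+1} - m_{i,j+1}·m_{i+1,j} for consecutive indices) equals N. -/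
/- Cauchy–Binet: `K * (a * d - L * b * c)` is `K` times the bilinear form of the matrix
`!![0, 1; -L, 0]` (determinant `L`) evaluated at `(a, b)` and `(c, d)`, so each 2 × 2 minor is
`K ^ 2 * L` times the product of the two consecutive 2 × 2 determinants of the paths. -/
theorem minor_twistedBilinear_eq {α : Type*} [CommRing α] (K L a b c d a' b' c' d' : α) :
    K * (a * d - L * b * c) * (K * (a' * d' - L * b' * c')) -
        K * (a * d' - L * b * c') * (K * (a' * d - L * b' * c)) =
      K ^ 2 * L * (a * b' - b * a') * (c * d' - d * c') := by
  ring

theorem tiling_from_paths_general (R S K L N : ℤ) (hNval : N = K ^ 2 * L * R * S)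
    (a b c d : ℤ → ℤ)
    (hpathR : ∀ i : ℤ, a (i - 1) * b i - b (i - 1) * a i = R)
    (hpathS : ∀ j : ℤ, c (j - 1) * d j - d (j - 1) * c j = S)
    (m : ℤ → ℤ → ℤ)
    (hm : ∀ i j, m i j = K * (a i * d j - L * b i * c j)) :
    ∀ i j : ℤ, m i j * m (i + 1) (j + 1) - m i (j + 1) * m (i + 1) j = N := by
  intro i j
  have hRi : a i * b (i + 1) - b i * a (i + 1) = R := by simpa using hpathR (i + 1)
  have hSj : c j * d (j + 1) - d j * c (j + 1) = S := by simpa using hpathS (j + 1)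
  rw [hm, hm, hm, hm, minor_twistedBilinear_eq, hRi, hSj, hNval]

/-- the map m_{ij} = K(a_i d_j - L b_i c_j) built from paths in
𝓕_R and 𝓕_S produces an N-tiling, N = K²LRS. -/
theorem tiling_from_paths (R S K L N : ℤ) (hR : 0 < R) (hS : 0 < S)
    (hK : 0 < K) (hL : L ≠ 0) (hN : N ≠ 0) (hNval : N = K ^ 2 * L * R * S)
    (a b c d : ℤ → ℤ)
    (hpathR : ∀ i : ℤ, a (i - 1) * b i - b (i - 1) * a i = R)
    (hpathS : ∀ j : ℤ, c (j - 1) * d j - d (j - 1) * c j = S)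
    (m : ℤ → ℤ → ℤ)
    (hm : ∀ i j, m i j = K * (a i * d j - L * b i * c j)) :
    ∀ i j : ℤ, m i j * m (i + 1) (j + 1) - m i (j + 1) * m (i + 1) j = N :=
  tiling_from_paths_general R S K L N hNval a b c d hpathR hpathS m hm
end

section
/- Define φ : ℕ⁺ × ℕ⁺ → ℕ⁺ × ℕ⁺ on the set X = {(x,y) : x·y divides x² + y² + 1} by φ(x,y) = ((x²+1)/y, x). Then φ maps X to X: if x·y divides x² + y² + 1 with x, y positive, then y divides x² + 1, the quotient z = (x²+1)/y is a positive integer, and z·x divides z² + x² + 1. -/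
/-! If `x y ∣ x² + y² + 1`, say `x y k = x² + y² + 1`, then `x² + 1 = y (x k - y)`, so `y ∣ x² + 1`
with cofactor `z = x k - y`. This `z` is the other root of `t² - k x t + x² + 1` (Vieta jumping), and
`z² + x² + 1 = z (z + y) = z x k`. -/

section VietaJump

variable {R : Type*} [CommRing R] {x y z : R}

theorem dvd_sq_add_one_of_mul_dvd_sq_add_sq_add_one (h : x * y ∣ x ^ 2 + y ^ 2 + 1) :
    y ∣ x ^ 2 + 1 := by
  obtain ⟨k, hk⟩ := h
  exact ⟨x * k - y, by linear_combination hk⟩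

theorem mul_dvd_sq_add_sq_add_one_of_mul_eq [IsDomain R] (hy : y ≠ 0)
    (h : x * y ∣ x ^ 2 + y ^ 2 + 1) (hz : z * y = x ^ 2 + 1) : z * x ∣ z ^ 2 + x ^ 2 + 1 := by
  obtain ⟨k, hk⟩ := h
  have hzk : z = x * k - y :=
    mul_right_cancel₀ hy (by linear_combination hz + hk)
  exact ⟨k, by linear_combination z * hzk - hz⟩

end VietaJump

theorem phi_maps_X_to_X_general (x y : ℤ) (hy : 0 < y)
    (h : x * y ∣ x ^ 2 + y ^ 2 + 1) :
    y ∣ x ^ 2 + 1 ∧ 0 < (x ^ 2 + 1) / y ∧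
      ((x ^ 2 + 1) / y * x) ∣ ((x ^ 2 + 1) / y) ^ 2 + x ^ 2 + 1 := by
  have hdvd := dvd_sq_add_one_of_mul_dvd_sq_add_sq_add_one h
  have hz : (x ^ 2 + 1) / y * y = x ^ 2 + 1 := Int.ediv_mul_cancel hdvd
  refine ⟨hdvd, ?_, mul_dvd_sq_add_sq_add_one_of_mul_eq hy.ne' h hz⟩
  exact pos_of_mul_pos_left (by rw [hz]; positivity) hy.le

/-- φ(x,y) = ((x²+1)/y, x) maps X to X, where
X = {(x,y) : x·y ∣ x² + y² + 1}. -/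
theorem phi_maps_X_to_X (x y : ℤ) (hx : 0 < x) (hy : 0 < y)
    (h : x * y ∣ x ^ 2 + y ^ 2 + 1) :
    y ∣ x ^ 2 + 1 ∧ 0 < (x ^ 2 + 1) / y ∧
      ((x ^ 2 + 1) / y * x) ∣ ((x ^ 2 + 1) / y) ^ 2 + x ^ 2 + 1 :=
  phi_maps_X_to_X_general x y hy h
end
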